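/- arXiv:1707.08440 — 2 statements merged into one kernel-verified Lean document; each statement's English description precedes it below -/
import Mathlib

section
/- Let (G_f, G_g) be jointly Gaussian centered random variables with variances |f|², |g|² and covariance ⟨f,g⟩ arising from Wiener integrals δ(f), δ(g) of f, g ∈ L²([0,T]). Then for every p ≥ 1, ‖exp(δ(f)) − exp(δ(g))‖_{L^p} ≤ C·S_p(|f−g|), where S_p(λ) = λ·exp(p·λ²) + exp(λ²/2) − 1 and C depends only on p and |g|. -/
/-!
Write `δ f - δ g = ‖f - g‖ • δ u` with `‖u‖ ≤ 1`. The elementary bounds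
`|eᵃ - eᵇ| ≤ |a - b| (eᵃ + eᵇ)` and `|w| ≤ eʷ + e⁻ʷ` turn this into the pointwise bound
`|e^{δ f} - e^{δ g}| ≤ ‖f - g‖ (e^{δ(f + u)} + e^{δ(f - u)} + e^{δ(g + u)} + e^{δ(g - u)})`,
so no Hölder inequality is needed. Each summand is the exponential of a centred Gaussian of
variance at most `(‖g‖ + 1 + ‖f - g‖)²`, whose `Lᵖ` norm is `exp (p · variance / 2)` by the
Gaussian moment generating function; Minkowski's inequality then bounds the left-hand side by
`4 ‖f - g‖ exp (p (‖g‖ + 1 + ‖f - g‖)² / 2) ≤ 4 exp (p (‖g‖ + 1)²) S_p(‖f - g‖)`.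
-/

open MeasureTheory ProbabilityTheory Real

/-- `S_p(λ) = λ·exp(p·λ²) + exp(λ²/2) − 1`. -/
noncomputable def Spoly (p l : ℝ) : ℝ :=
  l * Real.exp (p * l ^ 2) + Real.exp (l ^ 2 / 2) - 1

open scoped NNReal ENNReal

lemma abs_exp_sub_exp_le (x y : ℝ) : |rexp x - rexp y| ≤ |x - y| * (rexp x + rexp y) := by
  wlog hxy : y ≤ x generalizing x y
  · rw [abs_sub_comm, abs_sub_comm x, add_comm]
    exact this y x (le_of_not_ge hxy)
  have key : rexp x * (y - x + 1) ≤ rexp y :=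
    calc rexp x * (y - x + 1) ≤ rexp x * rexp (y - x) := by gcongr; exact add_one_le_exp _
      _ = rexp y := by rw [← exp_add, add_sub_cancel]
  rw [abs_of_nonneg (sub_nonneg.2 (exp_le_exp.2 hxy)), abs_of_nonneg (sub_nonneg.2 hxy)]
  nlinarith [exp_pos y]

lemma abs_le_exp_add_exp_neg (x : ℝ) : |x| ≤ rexp x + rexp (-x) :=
  (le_add_of_nonneg_right zero_le_one).trans ((add_one_le_exp |x|).trans (exp_abs_le x))

lemma abs_exp_sub_exp_le_of_sub_eq_mul {a b l w : ℝ} (hl : 0 ≤ l) (h : a - b = l * w) :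
    |rexp a - rexp b| ≤ l * (rexp (a + w) + rexp (a - w) + rexp (b + w) + rexp (b - w)) :=
  calc |rexp a - rexp b| ≤ l * |w| * (rexp a + rexp b) := by
        simpa [h, abs_mul, abs_of_nonneg hl] using abs_exp_sub_exp_le a b
    _ ≤ l * (rexp w + rexp (-w)) * (rexp a + rexp b) := by
        gcongr; exact abs_le_exp_add_exp_neg w
    _ = _ := by simp only [exp_add, exp_sub, exp_neg, div_eq_mul_inv]; ring

lemma mul_exp_le_Spoly (p l : ℝ) : l * rexp (p * l ^ 2) ≤ Spoly p l := by
  have : 1 ≤ rexp (l ^ 2 / 2) := one_le_exp (by positivity)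
  rw [Spoly]
  linarith

lemma mul_exp_add_sq_le_exp_mul_Spoly {p l : ℝ} (hp : 0 ≤ p) (hl : 0 ≤ l) (r : ℝ) :
    l * rexp (p * (r + l) ^ 2 / 2) ≤ rexp (p * r ^ 2) * Spoly p l := by
  have hsq : p * (r + l) ^ 2 / 2 ≤ p * r ^ 2 + p * l ^ 2 := by
    nlinarith [mul_nonneg hp (sq_nonneg (r - l))]
  calc l * rexp (p * (r + l) ^ 2 / 2) ≤ l * (rexp (p * r ^ 2) * rexp (p * l ^ 2)) := by
        rw [← exp_add]; gcongr
    _ = rexp (p * r ^ 2) * (l * rexp (p * l ^ 2)) := by ring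
    _ ≤ rexp (p * r ^ 2) * Spoly p l := by gcongr; exact mul_exp_le_Spoly p l

lemma exists_norm_le_one_and_eq_norm_smul {E : Type*} [NormedAddCommGroup E] [NormedSpace ℝ E]
    (x : E) : ∃ u : E, ‖u‖ ≤ 1 ∧ x = ‖x‖ • u := by
  rcases eq_or_ne x 0 with rfl | hx
  · exact ⟨0, by simp, by simp⟩
  have hx' : ‖x‖ ≠ 0 := norm_ne_zero_iff.2 hx
  refine ⟨‖x‖⁻¹ • x, ?_, (smul_inv_smul₀ hx' x).symm⟩
  rw [norm_smul, norm_inv, norm_norm, inv_mul_cancel₀ hx']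

lemma norm_exp_sub_exp_le_mul_sum_exp {H Ω : Type*} [AddCommGroup H] [Module ℝ H]
    (δ : H →ₗ[ℝ] Ω → ℝ) {f g u : H} {l : ℝ} (hl : 0 ≤ l) (hfg : f - g = l • u) (ω : Ω) :
    ‖rexp (δ f ω) - rexp (δ g ω)‖
      ≤ l * ∑ i, rexp (δ ((![f + u, f - u, g + u, g - u] : Fin 4 → H) i) ω) := by
  have hsub : δ f ω - δ g ω = l * δ u ω := by simpa using congrFun (congrArg δ hfg) ω
  simpa [Fin.sum_univ_four, ← add_assoc] using abs_exp_sub_exp_le_of_sub_eq_mul hl hsub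

lemma eLpNorm_exp_gaussianReal (m : ℝ) (v : ℝ≥0) {p : ℝ} (hp : 0 < p) :
    eLpNorm rexp (ENNReal.ofReal p) (gaussianReal m v)
      = ENNReal.ofReal (rexp (m + p * v / 2)) := by
  have hmgf : ∫⁻ x, ‖rexp x‖ₑ ^ p ∂gaussianReal m v
      = ENNReal.ofReal (rexp (m * p + v * p ^ 2 / 2)) :=
    calc ∫⁻ x, ‖rexp x‖ₑ ^ p ∂gaussianReal m v
        = ∫⁻ x, ENNReal.ofReal (rexp (p * x)) ∂gaussianReal m v := by
          congr with x
          rw [Real.enorm_eq_ofReal (exp_nonneg x), ENNReal.ofReal_rpow_of_pos (exp_pos x),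
            ← exp_mul, mul_comm]
      _ = ENNReal.ofReal (mgf id (gaussianReal m v) p) :=
          (ofReal_integral_eq_lintegral_ofReal (integrable_exp_mul_gaussianReal p)
            (ae_of_all _ fun x => (exp_pos _).le)).symm
      _ = _ := by rw [mgf_id_gaussianReal]
  rw [eLpNorm_eq_lintegral_rpow_enorm_toReal (by simpa using hp) ENNReal.ofReal_ne_top,
    ENNReal.toReal_ofReal hp.le, hmgf, ENNReal.ofReal_rpow_of_pos (exp_pos _), ← exp_mul]
  congr 2
  field_simp

section

variable {Ω : Type*} [MeasurableSpace Ω] {P : Measure Ω}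

lemma eLpNorm_exp_of_map_eq_gaussianReal {X : Ω → ℝ} {m : ℝ} {v : ℝ≥0}
    (hX : P.map X = gaussianReal m v) {p : ℝ} (hp : 0 < p) :
    eLpNorm (fun ω => rexp (X ω)) (ENNReal.ofReal p) P
      = ENNReal.ofReal (rexp (m + p * v / 2)) := by
  have hXm : AEMeasurable X P := aemeasurable_of_map_neZero (by rw [hX]; infer_instance)
  rw [← eLpNorm_exp_gaussianReal m v hp, ← hX,
    eLpNorm_map_measure measurable_exp.aestronglyMeasurable hXm]
  rfl

lemma eLpNorm_sum_exp_le {ι : Type*} (s : Finset ι) {X : ι → Ω → ℝ} {v : ι → ℝ≥0}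
    (hX : ∀ i ∈ s, P.map (X i) = gaussianReal 0 (v i)) {V : ℝ} (hV : ∀ i ∈ s, (v i : ℝ) ≤ V)
    {p : ℝ} (hp : 1 ≤ p) :
    eLpNorm (fun ω => ∑ i ∈ s, rexp (X i ω)) (ENNReal.ofReal p) P
      ≤ s.card * ENNReal.ofReal (rexp (p * V / 2)) := by
  have hmeas : ∀ i ∈ s, AEStronglyMeasurable (fun ω => rexp (X i ω)) P := fun i hi =>
    (measurable_exp.comp_aemeasurable
      (aemeasurable_of_map_neZero (by rw [hX i hi]; infer_instance))).aestronglyMeasurable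
  calc eLpNorm (fun ω => ∑ i ∈ s, rexp (X i ω)) (ENNReal.ofReal p) P
      ≤ ∑ i ∈ s, eLpNorm (fun ω => rexp (X i ω)) (ENNReal.ofReal p) P := by
        simpa only [Finset.sum_fn] using eLpNorm_sum_le hmeas (ENNReal.one_le_ofReal.2 hp)
    _ = ∑ i ∈ s, ENNReal.ofReal (rexp (0 + p * v i / 2)) :=
        Finset.sum_congr rfl fun i hi =>
          eLpNorm_exp_of_map_eq_gaussianReal (hX i hi) (zero_lt_one.trans_le hp)
    _ ≤ s.card * ENNReal.ofReal (rexp (p * V / 2)) := by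
        rw [← nsmul_eq_mul]
        refine Finset.sum_le_card_nsmul _ _ _ fun i hi => ?_
        rw [zero_add]
        gcongr
        exact hV i hi

end

/-- For Wiener integrals `δ(f), δ(g)` of `f, g ∈ L²([0,T])` (modelled by an
isonormal Gaussian family `δ` on a Hilbert space `H`), for every `p ≥ 1`,
`‖exp(δ(f)) − exp(δ(g))‖_{L^p} ≤ C·S_p(|f−g|)` where `C` depends only on `p`
and `|g|`. -/
theorem lpNorm_exp_wiener_sub_exp_wiener :
    ∃ C : ℝ → ℝ → ℝ, ∀ p : ℝ, 1 ≤ p →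
      ∀ (H : Type) (_ : NormedAddCommGroup H) (_ : InnerProductSpace ℝ H)
        (Ω : Type) (_ : MeasurableSpace Ω) (P : Measure Ω),
        IsProbabilityMeasure P →
        ∀ (δ : H →ₗ[ℝ] Ω → ℝ),
          (∀ h : H, Measure.map (δ h) P = gaussianReal 0 (‖h‖₊ ^ 2)) →
          ∀ f g : H,
            0 < C p ‖g‖ ∧
            eLpNorm (fun ω => Real.exp (δ f ω) - Real.exp (δ g ω))
                (ENNReal.ofReal p) P
              ≤ ENNReal.ofReal (C p ‖g‖ * Spoly p ‖f - g‖) := by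
  refine ⟨fun p r => 4 * rexp (p * (r + 1) ^ 2),
    fun p hp H _ _ Ω _ P _ δ hδ f g => ⟨by positivity, ?_⟩⟩
  obtain ⟨u, hu, hfg⟩ := exists_norm_le_one_and_eq_norm_smul (f - g)
  set h : Fin 4 → H := ![f + u, f - u, g + u, g - u]
  have hpointwise := norm_exp_sub_exp_le_mul_sum_exp δ (norm_nonneg (f - g)) hfg
  have hnorm : ∀ i, ‖h i‖ ≤ ‖g‖ + 1 + ‖f - g‖ := by
    have hf : ‖f‖ ≤ ‖g‖ + ‖f - g‖ := norm_le_norm_add_norm_sub' f g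
    intro i
    fin_cases i <;> simp [h] <;>
      linarith [norm_nonneg (f - g), norm_add_le f u, norm_sub_le f u, norm_add_le g u,
        norm_sub_le g u]
  calc eLpNorm (fun ω => rexp (δ f ω) - rexp (δ g ω)) (ENNReal.ofReal p) P
      ≤ eLpNorm (fun ω => ‖f - g‖ * ∑ i, rexp (δ (h i) ω)) (ENNReal.ofReal p) P :=
        eLpNorm_mono_real hpointwise
    _ = ‖‖f - g‖‖ₑ * eLpNorm (fun ω => ∑ i, rexp (δ (h i) ω)) (ENNReal.ofReal p) P :=
        eLpNorm_const_smul ‖f - g‖ _ _ _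
    _ ≤ ‖‖f - g‖‖ₑ * (4 * ENNReal.ofReal (rexp (p * (‖g‖ + 1 + ‖f - g‖) ^ 2 / 2))) := by
        gcongr
        simpa using eLpNorm_sum_exp_le Finset.univ (fun i _ => hδ (h i))
          (fun i _ => by push_cast; gcongr; exact hnorm i) hp
    _ = ENNReal.ofReal (‖f - g‖ * (4 * rexp (p * (‖g‖ + 1 + ‖f - g‖) ^ 2 / 2))) := by
        rw [ENNReal.ofReal_mul (norm_nonneg _), ENNReal.ofReal_mul zero_le_four,
          ENNReal.ofReal_ofNat, Real.enorm_eq_ofReal (norm_nonneg _)]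
    _ ≤ ENNReal.ofReal (4 * rexp (p * (‖g‖ + 1) ^ 2) * Spoly p ‖f - g‖) := by
        refine ENNReal.ofReal_le_ofReal ?_
        linear_combination 4 * mul_exp_add_sq_le_exp_mul_Spoly
          (zero_le_one.trans hp) (norm_nonneg (f - g)) (‖g‖ + 1)
end

section
/- Pathwise stability estimate: let b be C₁-Lipschitz with linear growth constant C₂, let E_ε, E₀ : [0,T] → (0,∞) be continuous, and let Z^ε, Z solve Z^ε_t = x + ∫₀ᵗ b(Z^ε_s E_ε(s)^{-1})E_ε(s)ds and Z_t = x + ∫₀ᵗ b(Z_s E₀(s)^{-1})E₀(s)ds. Then sup_{t∈[0,T]} |Z^ε_t − Z_t| ≤ e^{C₁T}·Λ_ε, where Λ_ε = C₁∫₀ᵀ |Z_s|·|E_ε(s)^{-1} − E₀(s)^{-1}|·E_ε(s)ds + C₂∫₀ᵀ (1 + |Z_s|E₀(s)^{-1})·|E_ε(s) − E₀(s)|ds. -/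
open MeasureTheory intervalIntegral Real Set Filter Topology

/-!
At each time the drift difference `b(Zε/Eε)·Eε − b(Z/E₀)·E₀` splits into the change of the
state (at most `C₁|Zε − Z|`, since the weight `Eε` cancels the scaling `Eε⁻¹`), the change of
the scaling `Eε⁻¹ → E₀⁻¹` inside `b` (Lipschitz bound) and the change of the weight `Eε → E₀`
outside `b` (linear growth bound). Integrating gives
`|Zε_t − Z_t| ≤ Λε + C₁ ∫₀ᵗ |Zε_s − Z_s| ds`, and Grönwall's inequality closes the argument.
-/

theorem le_mul_exp_of_le_add_mul_integral {F : ℝ → ℝ} {δ K a b : ℝ}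
    (hF : ContinuousOn F (Icc a b)) (hK : 0 ≤ K)
    (h : ∀ u ∈ Icc a b, F u ≤ δ + K * ∫ s in a..u, F s) :
    ∀ u ∈ Icc a b, F u ≤ δ * exp (K * (u - a)) := by
  intro u hu
  -- the differential Grönwall bound applies to the right-hand side `g`, since `g' = K F ≤ K g`
  set g : ℝ → ℝ := fun u => δ + K * ∫ s in a..u, F s
  have hg_cont : ContinuousOn g (Icc a b) := by
    have hab : a ≤ b := hu.1.trans hu.2
    have hprim := continuousOn_primitive_interval (μ := volume) (f := F)
      (by rw [uIcc_of_le hab]; exact hF.integrableOn_Icc)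
    rw [uIcc_of_le hab] at hprim
    exact continuousOn_const.add (continuousOn_const.mul hprim)
  have hg_deriv : ∀ x ∈ Ico a b, HasDerivWithinAt g (K * F x) (Ici x) x := by
    intro x hx
    have hIcc : Icc a b ∈ 𝓝[>] x := Icc_mem_nhdsGT_of_mem hx
    have hprim := integral_hasDerivWithinAt_right (a := a) (s := Ici x) (t := Ioi x)
      ((hF.mono (Icc_subset_Icc le_rfl hx.2.le)).intervalIntegrable_of_Icc hx.1)
      ((hF.stronglyMeasurableAtFilter_nhdsWithin measurableSet_Icc x).filter_mono
        (nhdsWithin_le_of_mem hIcc))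
      ((hF x (Ico_subset_Icc_self hx)).mono_of_mem_nhdsWithin hIcc)
    exact (hprim.const_mul K).const_add δ
  have hg_le := le_gronwallBound_of_liminf_deriv_right_le (δ := δ) (K := K) (ε := 0) hg_cont
    (fun x hx _ hr => (hg_deriv x hx).liminf_right_slope_le hr) (by simp [g])
    (fun x hx => by simpa using mul_le_mul_of_nonneg_left (h x (Ico_subset_Icc_self hx)) hK) u hu
  rw [gronwallBound_ε0] at hg_le
  exact (h u hu).trans hg_le

theorem abs_drift_sub_le {b : ℝ → ℝ} {C₁ C₂ : ℝ}
    (hb_lip : ∀ u v : ℝ, |b u - b v| ≤ C₁ * |u - v|)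
    (hb_growth : ∀ u : ℝ, |b u| ≤ C₂ * (1 + |u|)) {z z₀ e e₀ : ℝ} (he : 0 < e) (he₀ : 0 < e₀) :
    |b (z * e⁻¹) * e - b (z₀ * e₀⁻¹) * e₀| ≤
      C₁ * |z - z₀| + (C₁ * (|z₀| * |e⁻¹ - e₀⁻¹| * e) + C₂ * ((1 + |z₀| * e₀⁻¹) * |e - e₀|)) := by
  have h_state : |(b (z * e⁻¹) - b (z₀ * e⁻¹)) * e| ≤ C₁ * |z - z₀| :=
    calc |(b (z * e⁻¹) - b (z₀ * e⁻¹)) * e| = |b (z * e⁻¹) - b (z₀ * e⁻¹)| * e := by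
          rw [abs_mul, abs_of_pos he]
      _ ≤ C₁ * (|z - z₀| * e⁻¹) * e := by
          gcongr
          simpa only [← sub_mul, abs_mul, abs_of_pos (inv_pos.2 he)]
            using hb_lip (z * e⁻¹) (z₀ * e⁻¹)
      _ = C₁ * |z - z₀| := by field_simp
  have h_scale : |(b (z₀ * e⁻¹) - b (z₀ * e₀⁻¹)) * e| ≤ C₁ * (|z₀| * |e⁻¹ - e₀⁻¹| * e) :=
    calc |(b (z₀ * e⁻¹) - b (z₀ * e₀⁻¹)) * e| = |b (z₀ * e⁻¹) - b (z₀ * e₀⁻¹)| * e := by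
          rw [abs_mul, abs_of_pos he]
      _ ≤ C₁ * (|z₀| * |e⁻¹ - e₀⁻¹|) * e := by
          gcongr
          simpa only [← mul_sub, abs_mul] using hb_lip (z₀ * e⁻¹) (z₀ * e₀⁻¹)
      _ = C₁ * (|z₀| * |e⁻¹ - e₀⁻¹| * e) := by ring
  have h_weight : |b (z₀ * e₀⁻¹) * (e - e₀)| ≤ C₂ * ((1 + |z₀| * e₀⁻¹) * |e - e₀|) :=
    calc |b (z₀ * e₀⁻¹) * (e - e₀)| = |b (z₀ * e₀⁻¹)| * |e - e₀| := abs_mul _ _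
      _ ≤ C₂ * (1 + |z₀| * e₀⁻¹) * |e - e₀| := by
          gcongr
          simpa only [abs_mul, abs_of_pos (inv_pos.2 he₀)] using hb_growth (z₀ * e₀⁻¹)
      _ = C₂ * ((1 + |z₀| * e₀⁻¹) * |e - e₀|) := by ring
  calc |b (z * e⁻¹) * e - b (z₀ * e₀⁻¹) * e₀|
      = |(b (z * e⁻¹) - b (z₀ * e⁻¹)) * e + (b (z₀ * e⁻¹) - b (z₀ * e₀⁻¹)) * e
          + b (z₀ * e₀⁻¹) * (e - e₀)| := by ring_nf
    _ ≤ |(b (z * e⁻¹) - b (z₀ * e⁻¹)) * e| + |(b (z₀ * e⁻¹) - b (z₀ * e₀⁻¹)) * e|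
          + |b (z₀ * e₀⁻¹) * (e - e₀)| := abs_add_three _ _ _
    _ ≤ _ := by linarith

theorem abs_sub_le_integral_mul_exp_of_eq_integral {Z₁ Z₂ G₁ G₂ φ : ℝ → ℝ} {x K a b : ℝ}
    (hK : 0 ≤ K) (hG₁ : IntervalIntegrable G₁ volume a b)
    (hG₂ : IntervalIntegrable G₂ volume a b)
    (hφ_nonneg : ∀ s ∈ Icc a b, 0 ≤ φ s) (hφ : IntervalIntegrable φ volume a b)
    (hZ₁ : ∀ u ∈ Icc a b, Z₁ u = x + ∫ s in a..u, G₁ s)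
    (hZ₂ : ∀ u ∈ Icc a b, Z₂ u = x + ∫ s in a..u, G₂ s)
    (hG : ∀ s ∈ Icc a b, |G₁ s - G₂ s| ≤ K * |Z₁ s - Z₂ s| + φ s) :
    ∀ u ∈ Icc a b, |Z₁ u - Z₂ u| ≤ (∫ s in a..b, φ s) * exp (K * (u - a)) := by
  have hsub_int : ∀ {f : ℝ → ℝ}, IntervalIntegrable f volume a b →
      ∀ u ∈ Icc a b, IntervalIntegrable f volume a u := fun hf u hu =>
    hf.mono_set (uIcc_subset_uIcc_left (Icc_subset_uIcc hu))
  have hZ_sub : ∀ u ∈ Icc a b, Z₁ u - Z₂ u = ∫ s in a..u, (G₁ s - G₂ s) := fun u hu => by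
    rw [hZ₁ u hu, hZ₂ u hu, integral_sub (hsub_int hG₁ u hu) (hsub_int hG₂ u hu)]
    ring
  have hD_cont : ContinuousOn (fun u => |Z₁ u - Z₂ u|) (Icc a b) :=
    (((continuousOn_primitive_interval' (hG₁.sub hG₂) left_mem_uIcc).mono
      Icc_subset_uIcc).abs).congr fun u hu => by rw [hZ_sub u hu]
  refine le_mul_exp_of_le_add_mul_integral hD_cont hK fun u hu => ?_
  have hD_int : IntervalIntegrable (fun s => |Z₁ s - Z₂ s|) volume a u :=
    (hD_cont.mono (Icc_subset_Icc le_rfl hu.2)).intervalIntegrable_of_Icc hu.1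
  calc |Z₁ u - Z₂ u| = |∫ s in a..u, (G₁ s - G₂ s)| := by rw [hZ_sub u hu]
    _ ≤ ∫ s in a..u, |G₁ s - G₂ s| := abs_integral_le_integral_abs hu.1
    _ ≤ ∫ s in a..u, (K * |Z₁ s - Z₂ s| + φ s) :=
        integral_mono_on hu.1 (hsub_int (hG₁.sub hG₂).abs u hu)
          ((hD_int.const_mul K).add (hsub_int hφ u hu))
          fun s hs => hG s ⟨hs.1, hs.2.trans hu.2⟩
    _ = K * (∫ s in a..u, |Z₁ s - Z₂ s|) + ∫ s in a..u, φ s := by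
        rw [integral_add (hD_int.const_mul K) (hsub_int hφ u hu),
          intervalIntegral.integral_const_mul]
    _ ≤ K * (∫ s in a..u, |Z₁ s - Z₂ s|) + ∫ s in a..b, φ s := by
        gcongr
        exact integral_mono_interval le_rfl hu.1 hu.2
          ((ae_restrict_mem measurableSet_Ioc).mono fun s hs =>
            hφ_nonneg s (Ioc_subset_Icc_self hs)) hφ
    _ = (∫ s in a..b, φ s) + K * ∫ s in a..u, |Z₁ s - Z₂ s| := add_comm _ _

theorem pathwise_stability_estimate_general
    (T x C₁ C₂ : ℝ) (hC₁ : 0 < C₁) (hC₂ : 0 < C₂)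
    (b : ℝ → ℝ)
    (hb_lip : ∀ u v : ℝ, |b u - b v| ≤ C₁ * |u - v|)
    (hb_growth : ∀ u : ℝ, |b u| ≤ C₂ * (1 + |u|))
    (Eε E₀ : ℝ → ℝ)
    (hEε_cont : ContinuousOn Eε (Set.Icc 0 T))
    (hE₀_cont : ContinuousOn E₀ (Set.Icc 0 T))
    (hEε_pos : ∀ s ∈ Set.Icc (0 : ℝ) T, 0 < Eε s)
    (hE₀_pos : ∀ s ∈ Set.Icc (0 : ℝ) T, 0 < E₀ s)
    (Zε Z : ℝ → ℝ)
    (hZε_cont : ContinuousOn Zε (Set.Icc 0 T))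
    (hZ_cont : ContinuousOn Z (Set.Icc 0 T))
    (hZε : ∀ t ∈ Set.Icc (0 : ℝ) T,
      Zε t = x + ∫ s in (0 : ℝ)..t, b (Zε s * (Eε s)⁻¹) * Eε s)
    (hZ : ∀ t ∈ Set.Icc (0 : ℝ) T,
      Z t = x + ∫ s in (0 : ℝ)..t, b (Z s * (E₀ s)⁻¹) * E₀ s) :
    ∀ t ∈ Set.Icc (0 : ℝ) T,
      |Zε t - Z t| ≤ Real.exp (C₁ * T) *
        (C₁ * (∫ s in (0 : ℝ)..T, |Z s| * |(Eε s)⁻¹ - (E₀ s)⁻¹| * Eε s)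
          + C₂ * ∫ s in (0 : ℝ)..T, (1 + |Z s| * (E₀ s)⁻¹) * |Eε s - E₀ s|) := by
  intro t ht
  have hT : 0 ≤ T := ht.1.trans ht.2
  have hb : Continuous b :=
    (LipschitzWith.of_dist_le' fun u v => by simpa only [Real.dist_eq] using hb_lip u v).continuous
  have hEε_inv := hEε_cont.inv₀ fun s hs => (hEε_pos s hs).ne'
  have hE₀_inv := hE₀_cont.inv₀ fun s hs => (hE₀_pos s hs).ne'
  have hφ₁ : ContinuousOn (fun s => |Z s| * |(Eε s)⁻¹ - (E₀ s)⁻¹| * Eε s) (Icc 0 T) :=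
    (hZ_cont.abs.mul (hEε_inv.sub hE₀_inv).abs).mul hEε_cont
  have hφ₂ : ContinuousOn (fun s => (1 + |Z s| * (E₀ s)⁻¹) * |Eε s - E₀ s|) (Icc 0 T) :=
    (continuousOn_const.add (hZ_cont.abs.mul hE₀_inv)).mul (hEε_cont.sub hE₀_cont).abs
  have hφ_nonneg : ∀ s ∈ Icc 0 T, 0 ≤ C₁ * (|Z s| * |(Eε s)⁻¹ - (E₀ s)⁻¹| * Eε s)
      + C₂ * ((1 + |Z s| * (E₀ s)⁻¹) * |Eε s - E₀ s|) := fun s hs => by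
    have := hEε_pos s hs
    have := hE₀_pos s hs
    positivity
  have h_est := abs_sub_le_integral_mul_exp_of_eq_integral hC₁.le
    (((hb.comp_continuousOn (hZε_cont.mul hEε_inv)).mul hEε_cont).intervalIntegrable_of_Icc hT)
    (((hb.comp_continuousOn (hZ_cont.mul hE₀_inv)).mul hE₀_cont).intervalIntegrable_of_Icc hT)
    hφ_nonneg
    (((continuousOn_const.mul hφ₁).add (continuousOn_const.mul hφ₂)).intervalIntegrable_of_Icc hT)
    hZε hZ (fun s hs => abs_drift_sub_le hb_lip hb_growth (hEε_pos s hs) (hE₀_pos s hs)) t ht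
  have hΛ := integral_nonneg (μ := volume) hT hφ_nonneg
  rw [integral_add ((hφ₁.intervalIntegrable_of_Icc hT).const_mul _)
      ((hφ₂.intervalIntegrable_of_Icc hT).const_mul _), intervalIntegral.integral_const_mul,
    intervalIntegral.integral_const_mul] at h_est hΛ
  refine h_est.trans ?_
  rw [mul_comm, sub_zero]
  gcongr
  exact ht.2

/-- Pathwise stability estimate: let `b` be `C₁`-Lipschitz with linear growth
constant `C₂`, let `Eε, E₀ : [0,T] → (0,∞)` be continuous, and let `Zε, Z` solve
`Zε_t = x + ∫₀ᵗ b(Zε_s·Eε(s)⁻¹)·Eε(s) ds` and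
`Z_t = x + ∫₀ᵗ b(Z_s·E₀(s)⁻¹)·E₀(s) ds`.  Then
`sup_{t∈[0,T]} |Zε_t − Z_t| ≤ e^{C₁T}·Λε`, where
`Λε = C₁∫₀ᵀ |Z_s|·|Eε(s)⁻¹ − E₀(s)⁻¹|·Eε(s) ds
      + C₂∫₀ᵀ (1 + |Z_s|·E₀(s)⁻¹)·|Eε(s) − E₀(s)| ds`. -/
theorem pathwise_stability_estimate
    (T x C₁ C₂ : ℝ) (hT : 0 < T) (hC₁ : 0 < C₁) (hC₂ : 0 < C₂)
    (b : ℝ → ℝ) (hb_meas : Measurable b)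
    (hb_lip : ∀ u v : ℝ, |b u - b v| ≤ C₁ * |u - v|)
    (hb_growth : ∀ u : ℝ, |b u| ≤ C₂ * (1 + |u|))
    (Eε E₀ : ℝ → ℝ)
    (hEε_cont : ContinuousOn Eε (Set.Icc 0 T))
    (hE₀_cont : ContinuousOn E₀ (Set.Icc 0 T))
    (hEε_pos : ∀ s ∈ Set.Icc (0 : ℝ) T, 0 < Eε s)
    (hE₀_pos : ∀ s ∈ Set.Icc (0 : ℝ) T, 0 < E₀ s)
    (Zε Z : ℝ → ℝ)
    (hZε_cont : ContinuousOn Zε (Set.Icc 0 T))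
    (hZ_cont : ContinuousOn Z (Set.Icc 0 T))
    (hZε : ∀ t ∈ Set.Icc (0 : ℝ) T,
      Zε t = x + ∫ s in (0 : ℝ)..t, b (Zε s * (Eε s)⁻¹) * Eε s)
    (hZ : ∀ t ∈ Set.Icc (0 : ℝ) T,
      Z t = x + ∫ s in (0 : ℝ)..t, b (Z s * (E₀ s)⁻¹) * E₀ s) :
    ∀ t ∈ Set.Icc (0 : ℝ) T,
      |Zε t - Z t| ≤ Real.exp (C₁ * T) *
        (C₁ * (∫ s in (0 : ℝ)..T, |Z s| * |(Eε s)⁻¹ - (E₀ s)⁻¹| * Eε s)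
          + C₂ * ∫ s in (0 : ℝ)..T, (1 + |Z s| * (E₀ s)⁻¹) * |Eε s - E₀ s|) :=
  pathwise_stability_estimate_general T x C₁ C₂ hC₁ hC₂ b hb_lip hb_growth Eε E₀ hEε_cont hE₀_cont
    hEε_pos hE₀_pos Zε Z hZε_cont hZ_cont hZε hZ
end
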